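/- Let B be a finite set, S ⊆ B, f : B → C, and g as above (argmax of counts with order-based tie-breaking, smaller label wins ties). Define LOCAL(f, S) = { c ≠ g(f) : |{b ∈ S : f(b) = g(f)}| < |{b ∈ S : f(b) = c}| + |B \ S| + (1 if g(f) > c else 0) }. Then for every f' : B → C agreeing with f on S, g(f') ∈ LOCAL(f, S) ∪ {g(f)}. -/

import Mathlib

/-- Number of ablations in `B` labeled `c` by `f`. -/
def voteCount {β C : Type*} [DecidableEq C] (B : Finset β) (f : β → C) (c : C) : ℕ :=
  (B.filter fun b => f b = c).card

/-- `c` is the argmax of vote counts over `B` with smaller-label tie-breaking. -/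
def majWins {β C : Type*} [DecidableEq C] [LinearOrder C]
    (B : Finset β) (f : β → C) (c : C) : Prop :=
  ∀ c' ≠ c, voteCount B f c' + (if c' < c then 1 else 0) ≤ voteCount B f c

/-- The set of local-malicious labels of `f` (with clean prediction `c₁`) with respect
to the unaffected set `S ⊆ B` (Definition 1 of the paper). -/
def localSet {β C : Type*} [DecidableEq β] [DecidableEq C] [LinearOrder C]
    (B S : Finset β) (f : β → C) (c₁ : C) : Set C :=
  {c | c ≠ c₁ ∧ voteCount S f c₁ <
    voteCount S f c + (B \ S).card + (if c < c₁ then 1 else 0)}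

section VoteCount

variable {β C : Type*} [DecidableEq C]

theorem voteCount_congr {S : Finset β} {f f' : β → C} (h : ∀ b ∈ S, f' b = f b) (c : C) :
    voteCount S f' c = voteCount S f c :=
  congrArg Finset.card (Finset.filter_congr fun b hb => by rw [h b hb])

theorem voteCount_mono {S B : Finset β} (hS : S ⊆ B) (f : β → C) (c : C) :
    voteCount S f c ≤ voteCount B f c :=
  Finset.card_le_card (Finset.filter_subset_filter _ hS)

theorem voteCount_le_add_card_sdiff [DecidableEq β] (B S : Finset β) (f : β → C) (c : C) :
    voteCount B f c ≤ voteCount S f c + (B \ S).card :=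
  calc voteCount B f c
      ≤ ((S.filter fun b => f b = c) ∪ (B \ S)).card := by
        refine Finset.card_le_card fun b hb => ?_
        simp only [Finset.mem_filter, Finset.mem_union, Finset.mem_sdiff] at hb ⊢
        tauto
    _ ≤ voteCount S f c + (B \ S).card := Finset.card_union_le _ _

end VoteCount

-- As `c ≠ c₁`, exactly one of the two tie-break bonuses is `1`.
theorem lt_add_ite_of_add_ite_le {C : Type*} [LinearOrder C] {c c₁ : C} (h : c ≠ c₁)
    {m n : ℕ} (hmn : m + (if c₁ < c then 1 else 0) ≤ n) :
    m < n + (if c < c₁ then 1 else 0) := by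
  rcases h.lt_or_gt with h | h <;>
    simp only [h, h.not_gt, if_true, if_false] at hmn ⊢ <;> omega

theorem output_in_local_or_clean_general {β C : Type*} [DecidableEq β] [DecidableEq C]
    [LinearOrder C] (B S : Finset β) (hS : S ⊆ B) (f : β → C) (c₁ : C) :
    ∀ f' : β → C, (∀ b ∈ S, f' b = f b) →
      ∀ c, majWins B f' c → c ∈ localSet B S f c₁ ∪ {c₁} := by
  intro f' hagree c hc
  by_cases hcc : c = c₁
  · exact Or.inr hcc
  refine Or.inl ⟨hcc, lt_add_ite_of_add_ite_le hcc ?_⟩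
  calc voteCount S f c₁ + (if c₁ < c then 1 else 0)
      = voteCount S f' c₁ + (if c₁ < c then 1 else 0) := by rw [voteCount_congr hagree]
    _ ≤ voteCount B f' c₁ + (if c₁ < c then 1 else 0) :=
        Nat.add_le_add_right (voteCount_mono hS f' c₁) _
    _ ≤ voteCount B f' c := hc c₁ (Ne.symm hcc)
    _ ≤ voteCount S f' c + (B \ S).card := voteCount_le_add_card_sdiff B S f' c
    _ = voteCount S f c + (B \ S).card := by rw [voteCount_congr hagree]

/-- Lemma 1: any argmax label of a labeling `f'` agreeing with `f` on `S` lies in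
`LOCAL(f,S) ∪ {g(f)}`. -/
theorem output_in_local_or_clean {β C : Type*} [DecidableEq β] [DecidableEq C]
    [LinearOrder C] (B S : Finset β) (hS : S ⊆ B) (f : β → C) (c₁ : C)
    (hg : majWins B f c₁) :
    ∀ f' : β → C, (∀ b ∈ S, f' b = f b) →
      ∀ c, majWins B f' c → c ∈ localSet B S f c₁ ∪ {c₁} :=
  output_in_local_or_clean_general B S hS f c₁
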